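/- A matching is cutoff stable if and only if it is induced by minimal cutoff scores, i.e., cutoff scores d such that for every project p, either d(p) = 0 or decreasing d(p) by one (keeping other cutoffs fixed) induces an infeasible matching. -/

import Mathlib

open Finset

/-- An instance of the two-sided matching problem: applicants `A` with strict preference
lists over acceptable projects, projects `P` with strict preference lists over
acceptable applicants (best first), and capacities. -/
structure MatchInst (A P : Type) where
  prefA : A → List P
  prefP : P → List A
  cap : P → ℕ

variable {A P : Type} [Fintype A] [Fintype P] [DecidableEq A] [DecidableEq P]

/-- number of applicants matched to project `p` -/
def mcount (M : A → Option P) (p : P) : ℕ := (univ.filter fun a => M a = some p).card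

/-- counts after adding one extra applicant to project `p` (the matching `M ∪ {(a,p)}`) -/
def addCount (M : A → Option P) (p : P) : P → ℕ :=
  fun q => mcount M q + if q = p then 1 else 0

/-- the matching `(M ∪ {(a,p)}) \ {(a, M(a))}` -/
def swap (M : A → Option P) (a : A) (p : P) : A → Option P := Function.update M a (some p)

/-- a feasibility function on (anonymous) distributions of applicants over projects,
satisfying the heredity property -/
def Heredity (f : (P → ℕ) → Prop) : Prop :=
  f (fun _ => 0) ∧ ∀ v w : P → ℕ, (∀ p, w p ≤ v p) → f v → f w

namespace MatchInst

variable (I : MatchInst A P)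

def accA (a : A) (p : P) : Prop := p ∈ I.prefA a
def accP (p : P) (a : A) : Prop := a ∈ I.prefP p
/-- rank of project `p` in applicant `a`'s list (0-indexed; lower is better) -/
def rkA (a : A) (p : P) : ℕ := (I.prefA a).idxOf p
/-- rank of applicant `a` in project `p`'s list (0-indexed; lower is better) -/
def rkP (p : P) (a : A) : ℕ := (I.prefP p).idxOf a
/-- score of applicant `a` at project `p`: `|A| - k + 1` if `a` is ranked `k`-th, `0` if unranked -/
def score (p : P) (a : A) : ℕ :=
  if a ∈ I.prefP p then Fintype.card A - (I.prefP p).idxOf a else 0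

def IsMatching (M : A → Option P) : Prop :=
  (∀ a p, M a = some p → I.accA a p ∧ I.accP p a) ∧ ∀ p, mcount M p ≤ I.cap p

/-- `a` strictly prefers project `p` to the assignment `o` (being unmatched is worst) -/
def Prefers (a : A) (p : P) (o : Option P) : Prop :=
  I.accA a p ∧ ∀ q, o = some q → I.rkA a p < I.rkA a q

/-- no justified envy -/
def Fair (M : A → Option P) : Prop :=
  ∀ a p, M a ≠ some p → I.Prefers a p (M a) →
    ∀ a', M a' = some p → I.rkP p a' < I.rkP p a

/-- applicant `a` is admissible at project `p` under cutoffs `d` -/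
def Adm (d : P → ℕ) (a : A) (p : P) : Prop :=
  I.accA a p ∧ I.accP p a ∧ d p ≤ I.score p a

/-- cutoffs `d` induce the matching `M`: every applicant is matched to her most
preferred project where she is admissible (and unmatched if there is none) -/
def Induces (d : P → ℕ) (M : A → Option P) : Prop :=
  ∀ a : A,
    (∀ p, M a = some p → I.Adm d a p ∧ ∀ q, I.Adm d a q → q ≠ p → I.rkA a p < I.rkA a q) ∧
    (M a = none → ∀ p, ¬ I.Adm d a p)

def Blocking (M : A → Option P) (a : A) (p : P) : Prop :=
  I.Prefers a p (M a) ∧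
    ((mcount M p < I.cap p ∧ I.accP p a) ∨ ∃ a', M a' = some p ∧ I.rkP p a < I.rkP p a')

def StronglyStable (f : (P → ℕ) → Prop) (M : A → Option P) : Prop :=
  I.IsMatching M ∧ f (mcount M) ∧
    ∀ a p, I.Blocking M a p →
      (∀ a', M a' = some p → I.rkP p a' < I.rkP p a) ∧ ¬ f (mcount (swap M a p))

/-- weak stability in terms of permitted blocking pairs -/
def WeaklyStableBlk (f : (P → ℕ) → Prop) (M : A → Option P) : Prop :=
  I.IsMatching M ∧ f (mcount M) ∧
    ∀ a p, I.Blocking M a p →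
      (∀ a', M a' = some p → I.rkP p a' < I.rkP p a) ∧ ¬ f (addCount M p)

def WeaklyNonWasteful (f : (P → ℕ) → Prop) (M : A → Option P) : Prop :=
  f (mcount M) ∧ ∀ a p, M a ≠ some p → I.accP p a → I.Prefers a p (M a) →
    ¬ f (addCount M p) ∨ I.cap p ≤ mcount M p

/-- weak stability as fairness plus weak non-wastefulness -/
def WeaklyStable (f : (P → ℕ) → Prop) (M : A → Option P) : Prop :=
  I.IsMatching M ∧ I.Fair M ∧ I.WeaklyNonWasteful f M

def CutoffNonWasteful (f : (P → ℕ) → Prop) (M : A → Option P) : Prop :=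
  f (mcount M) ∧ ∀ a p, M a ≠ some p → I.accP p a → I.Prefers a p (M a) →
    ¬ f (mcount (swap M a p)) ∨
    (∃ a', M a' ≠ some p ∧ I.accP p a' ∧ I.rkP p a' < I.rkP p a ∧
      I.Prefers a' p (M a') ∧ ¬ f (mcount (swap M a' p))) ∨
    I.cap p ≤ mcount M p

def CutoffStable (f : (P → ℕ) → Prop) (M : A → Option P) : Prop :=
  I.IsMatching M ∧ I.Fair M ∧ I.CutoffNonWasteful f M

/-- project `p` is unconstrained for `M`: one more applicant can be added to `p` feasibly -/
def Unconstrained (f : (P → ℕ) → Prop) (M : A → Option P) (p : P) : Prop :=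
  f (addCount M p)

/-- cutoffs after decreasing the cutoff of `p` by one -/
def decCut (d : P → ℕ) (p : P) : P → ℕ := Function.update d p (d p - 1)

/-- minimal cutoffs: no cutoff can be decreased keeping the induced matching feasible -/
def MinimalCutoffs (f : (P → ℕ) → Prop) (d : P → ℕ) : Prop :=
  ∀ p, d p = 0 ∨ ∀ M', I.Induces (decCut d p) M' → ¬ f (mcount M')

def StrictlyBetter (a : A) (o o' : Option P) : Prop :=
  ∃ p, o = some p ∧ I.accA a p ∧ ∀ q, o' = some q → I.rkA a p < I.rkA a q

def ParetoDominates (M' M : A → Option P) : Prop :=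
  (∀ a, M' a = M a ∨ I.StrictlyBetter a (M' a) (M a)) ∧
    ∃ a, I.StrictlyBetter a (M' a) (M a)

end MatchInst

/-!
For a fair matching `M`, let the cutoff of `p` be one more than the largest score at `p` of an
applicant who prefers `p` to her assignment in `M` (and `0` if there is none); fairness says
exactly that these cutoffs induce `M`. Since scores at `p` are distinct, lowering a cutoff
`d p > 0` by one makes only the applicant scored `d p - 1` newly admissible at `p`, so the matching
then induced is `M` itself or `M` with that applicant moved to `p`. Minimality of the cutoffs
and cutoff non-wastefulness are thus two descriptions of the infeasibility of these matchings.
-/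

namespace MatchInst

variable {A P : Type} {I : MatchInst A P}

section

variable [DecidableEq A]

lemma rkP_lt_of_not_accP {p : P} {a b : A} (ha : I.accP p a) (hb : ¬ I.accP p b) :
    I.rkP p a < I.rkP p b := by
  unfold rkP
  rw [List.idxOf_eq_length_iff.2 hb]
  exact List.idxOf_lt_length_iff.2 ha

lemma swap_self (M : A → Option P) (a : A) (p : P) : swap M a p a = some p :=
  Function.update_self ..

lemma swap_of_ne (M : A → Option P) {a b : A} (p : P) (h : b ≠ a) : swap M a p b = M b :=
  Function.update_of_ne h ..

variable [Fintype A]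

lemma score_of_accP {p : P} {a : A} (h : I.accP p a) :
    I.score p a = Fintype.card A - I.rkP p a := if_pos h

lemma score_le_card (p : P) (a : A) : I.score p a ≤ Fintype.card A := by
  unfold score; split <;> omega

lemma score_lt_score_iff {p : P} {a b : A} (hnd : (I.prefP p).Nodup)
    (ha : I.accP p a) (hb : I.accP p b) :
    I.score p a < I.score p b ↔ I.rkP p b < I.rkP p a := by
  have hlen := hnd.length_le_card
  have hb' : I.rkP p b < (I.prefP p).length := List.idxOf_lt_length_iff.2 hb
  rw [score_of_accP ha, score_of_accP hb]
  omega

lemma eq_of_score_eq {p : P} {a b : A} (hnd : (I.prefP p).Nodup)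
    (ha : I.accP p a) (hb : I.accP p b) (h : I.score p a = I.score p b) : a = b := by
  have hlen := hnd.length_le_card
  have ha' : I.rkP p a < (I.prefP p).length := List.idxOf_lt_length_iff.2 ha
  have hb' : I.rkP p b < (I.prefP p).length := List.idxOf_lt_length_iff.2 hb
  rw [score_of_accP ha, score_of_accP hb] at h
  exact (List.idxOf_inj ha).1 (by unfold rkP at *; omega)

end

section

variable [DecidableEq P]

lemma eq_of_rkA_eq {a : A} {p q : P} (hp : I.accA a p) (h : I.rkA a p = I.rkA a q) : p = q :=
  (List.idxOf_inj hp).1 h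

lemma prefers_none {a : A} {p : P} (h : I.accA a p) : I.Prefers a p none :=
  ⟨h, by simp⟩

lemma prefers_some_iff {a : A} {p q : P} :
    I.Prefers a q (some p) ↔ I.accA a q ∧ I.rkA a q < I.rkA a p := by
  simp [Prefers]

lemma Prefers.ne_some {a : A} {p : P} {o : Option P} (h : I.Prefers a p o) : o ≠ some p :=
  fun e => lt_irrefl _ (h.2 p e)

lemma Prefers.trans {a : A} {p q : P} {o : Option P} (hq : I.Prefers a q (some p))
    (hp : I.Prefers a p o) : I.Prefers a q o :=
  ⟨hq.1, fun r hr => (hq.2 p rfl).trans (hp.2 r hr)⟩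

end

variable [Fintype A] [DecidableEq A] [DecidableEq P]

lemma induces_iff {d : P → ℕ} {M : A → Option P} :
    I.Induces d M ↔
      (∀ a p, M a = some p → I.Adm d a p) ∧ ∀ a p, I.Prefers a p (M a) → ¬ I.Adm d a p := by
  constructor
  · intro h
    refine ⟨fun a p hp => ((h a).1 p hp).1, fun a p hpref hadm => ?_⟩
    cases e : M a with
    | none => exact (h a).2 e p hadm
    | some q =>
      rw [e] at hpref
      have hpq : p ≠ q := by rintro rfl; exact hpref.ne_some rfl
      exact lt_asymm (hpref.2 q rfl) (((h a).1 q e).2 p hadm hpq)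
  · rintro ⟨hadm, hno⟩ a
    refine ⟨fun p hp => ⟨hadm a p hp, fun q hq hqp => ?_⟩, fun hn p hp => hno a p ?_ hp⟩
    · by_contra hle
      refine hno a q ?_ hq
      rw [hp, prefers_some_iff]
      exact ⟨hq.1, lt_of_le_of_ne (not_lt.1 hle) fun h => hqp (eq_of_rkA_eq hq.1 h)⟩
    · rw [hn]
      exact prefers_none hp.1

lemma Induces.score_lt {d : P → ℕ} {M : A → Option P} (hind : I.Induces d M) {a : A} {p : P}
    (hpref : I.Prefers a p (M a)) (hacc : I.accP p a) : I.score p a < d p :=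
  not_le.1 fun h => (induces_iff.1 hind).2 a p hpref ⟨hpref.1, hacc, h⟩

lemma Induces.unique {d : P → ℕ} {M₁ M₂ : A → Option P}
    (h₁ : I.Induces d M₁) (h₂ : I.Induces d M₂) : M₁ = M₂ := by
  funext a
  obtain ⟨c₁, n₁⟩ := h₁ a
  obtain ⟨c₂, n₂⟩ := h₂ a
  cases e₁ : M₁ a with
  | none =>
    cases e₂ : M₂ a with
    | none => rfl
    | some q => exact absurd (c₂ q e₂).1 (n₁ e₁ q)
  | some p =>
    cases e₂ : M₂ a with
    | none => exact absurd (c₁ p e₁).1 (n₂ e₂ p)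
    | some q =>
      by_contra hne
      have hpq : p ≠ q := fun h => hne (congrArg some h)
      exact lt_asymm ((c₁ p e₁).2 q (c₂ q e₂).1 hpq.symm) ((c₂ q e₂).2 p (c₁ p e₁).1 hpq)

lemma adm_decCut_iff {d : P → ℕ} {p q : P} {a : A} :
    I.Adm (decCut d p) a q ↔
      I.Adm d a q ∨ (q = p ∧ I.accA a p ∧ I.accP p a ∧ I.score p a = d p - 1) := by
  unfold Adm decCut
  rcases eq_or_ne q p with rfl | hq
  · simp only [Function.update_self, true_and]
    constructor
    · rintro ⟨hA, hP, hs⟩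
      by_cases hle : d q ≤ I.score q a
      · exact Or.inl ⟨hA, hP, hle⟩
      · exact Or.inr ⟨hA, hP, by omega⟩
    · rintro (⟨hA, hP, hs⟩ | ⟨hA, hP, hs⟩) <;> exact ⟨hA, hP, by omega⟩
  · simp [hq]

lemma Adm.decCut {d : P → ℕ} {p q : P} {a : A} (h : I.Adm d a q) : I.Adm (decCut d p) a q :=
  adm_decCut_iff.2 (Or.inl h)

lemma mcount_swap_self {M : A → Option P} {a : A} {p : P} (h : M a ≠ some p) :
    mcount (swap M a p) p = mcount M p + 1 := by
  have hset : (univ.filter fun b => swap M a p b = some p)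
      = insert a (univ.filter fun b => M b = some p) := by
    ext b
    rcases eq_or_ne b a with rfl | hb
    · simp [swap_self]
    · simp [swap_of_ne M p hb, hb]
  rw [mcount, hset, Finset.card_insert_of_notMem (by simp [h]), mcount]

lemma Induces.decCut_swap {d : P → ℕ} {M : A → Option P} (hind : I.Induces d M) {p : P} {a₀ : A}
    (hnd : (I.prefP p).Nodup) (ha₀ : I.accP p a₀) (hs : I.score p a₀ = d p - 1)
    (hpref : I.Prefers a₀ p (M a₀)) : I.Induces (decCut d p) (swap M a₀ p) := by
  obtain ⟨hadm, hno⟩ := induces_iff.1 hind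
  have hothers : ∀ a, a ≠ a₀ → ∀ q, I.Adm (decCut d p) a q → I.Adm d a q := by
    intro a ha q hq
    rcases adm_decCut_iff.1 hq with hq | ⟨-, -, hacc, hsa⟩
    · exact hq
    · exact absurd (eq_of_score_eq hnd hacc ha₀ (hsa.trans hs.symm)) ha
  refine induces_iff.2 ⟨fun a q hq => ?_, fun a q hq hq' => ?_⟩
  · rcases eq_or_ne a a₀ with rfl | ha
    · rw [swap_self, Option.some_inj] at hq
      subst hq
      exact adm_decCut_iff.2 (Or.inr ⟨rfl, hpref.1, ha₀, hs⟩)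
    · rw [swap_of_ne M p ha] at hq
      exact (hadm a q hq).decCut
  · rcases eq_or_ne a a₀ with rfl | ha
    · rw [swap_self] at hq
      rcases adm_decCut_iff.1 hq' with hq' | ⟨rfl, -⟩
      · exact hno a q (hq.trans hpref) hq'
      · exact hq.ne_some rfl
    · rw [swap_of_ne M p ha] at hq
      exact hno a q hq (hothers a ha q hq')

lemma Induces.decCut_self {d : P → ℕ} {M : A → Option P} (hind : I.Induces d M) {p : P}
    (h : ∀ a, I.accP p a → I.score p a = d p - 1 → ¬ I.Prefers a p (M a)) :
    I.Induces (decCut d p) M := by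
  obtain ⟨hadm, hno⟩ := induces_iff.1 hind
  refine induces_iff.2 ⟨fun a q hq => (hadm a q hq).decCut, fun a q hq hq' => ?_⟩
  rcases adm_decCut_iff.1 hq' with hq' | ⟨rfl, -, hacc, hs⟩
  · exact hno a q hq hq'
  · exact h a hacc hs hq

lemma Induces.fair {d : P → ℕ} {M : A → Option P} (hnd : ∀ p, (I.prefP p).Nodup)
    (hind : I.Induces d M) : I.Fair M := by
  intro a p _ hpref a' ha'
  have hadm' := (induces_iff.1 hind).1 a' p ha'
  by_cases hacc : I.accP p a
  · exact (score_lt_score_iff (hnd p) hacc hadm'.2.1).1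
      ((hind.score_lt hpref hacc).trans_le hadm'.2.2)
  · exact rkP_lt_of_not_accP hadm'.2.1 hacc

lemma Induces.cutoffNonWasteful {f : (P → ℕ) → Prop} {d : P → ℕ} {M : A → Option P}
    (hnd : ∀ p, (I.prefP p).Nodup) (hind : I.Induces d M) (hmin : I.MinimalCutoffs f d)
    (hfM : f (mcount M)) : I.CutoffNonWasteful f M := by
  refine ⟨hfM, fun a p _ hacc hpref => ?_⟩
  have hlt := hind.score_lt hpref hacc
  have hinf := (hmin p).resolve_left (by omega)
  by_cases hex : ∃ a₁, I.accP p a₁ ∧ I.score p a₁ = d p - 1 ∧ I.Prefers a₁ p (M a₁)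
  · obtain ⟨a₁, hacc₁, hs₁, hpref₁⟩ := hex
    have hnf := hinf _ (hind.decCut_swap (hnd p) hacc₁ hs₁ hpref₁)
    rcases eq_or_ne a a₁ with rfl | hne
    · exact Or.inl hnf
    · have hs : I.score p a ≠ d p - 1 := fun h =>
        hne (eq_of_score_eq (hnd p) hacc hacc₁ (h.trans hs₁.symm))
      have hrk := (score_lt_score_iff (hnd p) hacc hacc₁).1 (by omega)
      exact Or.inr (Or.inl ⟨a₁, hpref₁.ne_some, hacc₁, hrk, hpref₁, hnf⟩)
  · exact absurd hfM (hinf M (hind.decCut_self fun a₁ h₁ h₂ h₃ => hex ⟨a₁, h₁, h₂, h₃⟩))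

open Classical in
noncomputable def envyCutoff (I : MatchInst A P) (M : A → Option P) (p : P) : ℕ :=
  (univ.filter fun a => I.Prefers a p (M a) ∧ I.accP p a).sup fun a => I.score p a + 1

lemma envyCutoff_le_iff {M : A → Option P} {p : P} {n : ℕ} :
    I.envyCutoff M p ≤ n ↔ ∀ a, I.Prefers a p (M a) → I.accP p a → I.score p a < n := by
  simp [envyCutoff, Finset.sup_le_iff]

lemma score_lt_envyCutoff {M : A → Option P} {a : A} {p : P}
    (hpref : I.Prefers a p (M a)) (hacc : I.accP p a) : I.score p a < I.envyCutoff M p :=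
  envyCutoff_le_iff.1 le_rfl a hpref hacc

lemma envyCutoff_le_card_add_one (M : A → Option P) (p : P) :
    I.envyCutoff M p ≤ Fintype.card A + 1 :=
  envyCutoff_le_iff.2 fun a _ _ => Nat.lt_succ_of_le (score_le_card p a)

lemma exists_score_add_one_eq_envyCutoff {M : A → Option P} {p : P} (h : I.envyCutoff M p ≠ 0) :
    ∃ a, I.Prefers a p (M a) ∧ I.accP p a ∧ I.score p a + 1 = I.envyCutoff M p := by
  classical
  unfold envyCutoff at h ⊢
  set s := univ.filter fun a => I.Prefers a p (M a) ∧ I.accP p a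
  have hne : s.Nonempty := s.nonempty_iff_ne_empty.2 fun he => h (by rw [he]; rfl)
  obtain ⟨a, ha, hmax⟩ := s.exists_mem_eq_sup hne fun a => I.score p a + 1
  exact ⟨a, (Finset.mem_filter.1 ha).2.1, (Finset.mem_filter.1 ha).2.2, hmax.symm⟩

lemma induces_envyCutoff {M : A → Option P} (hnd : ∀ p, (I.prefP p).Nodup)
    (hM : I.IsMatching M) (hfair : I.Fair M) : I.Induces (I.envyCutoff M) M := by
  refine induces_iff.2 ⟨fun a p hp => ?_, fun a p hpref hadm => ?_⟩
  · obtain ⟨haccA, haccP⟩ := hM.1 a p hp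
    refine ⟨haccA, haccP, envyCutoff_le_iff.2 fun b hpref hb => ?_⟩
    exact (score_lt_score_iff (hnd p) hb haccP).2 (hfair b p hpref.ne_some hpref a hp)
  · exact (score_lt_envyCutoff hpref hadm.2.1).not_ge hadm.2.2

lemma minimalCutoffs_envyCutoff {f : (P → ℕ) → Prop} {M : A → Option P}
    (hnd : ∀ p, (I.prefP p).Nodup) (hcap : ∀ v, f v → ∀ p, v p ≤ I.cap p)
    (hM : I.CutoffStable f M) : I.MinimalCutoffs f (I.envyCutoff M) := by
  obtain ⟨hIsM, hfair, -, hnw⟩ := hM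
  refine fun p => or_iff_not_imp_left.2 fun hd M' hM' hfM' => ?_
  obtain ⟨a₀, hpref, hacc, hs⟩ := exists_score_add_one_eq_envyCutoff hd
  have hswap : M' = swap M a₀ p := hM'.unique
    ((induces_envyCutoff hnd hIsM hfair).decCut_swap (hnd p) hacc (by omega) hpref)
  subst hswap
  rcases hnw a₀ p hpref.ne_some hacc hpref with hinf | ⟨a', -, hacc', hrk, hpref', -⟩ | hfull
  · exact hinf hfM'
  · have := (score_lt_score_iff (hnd p) hacc hacc').2 hrk
    have := score_lt_envyCutoff hpref' hacc'
    omega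
  · have := hcap _ hfM' p
    rw [mcount_swap_self hpref.ne_some] at this
    omega

end MatchInst

theorem cutoffStable_iff_induced_by_minimal_cutoffs_general
    (I : MatchInst A P) (f : (P → ℕ) → Prop) (M : A → Option P)
    (hP : ∀ p, (I.prefP p).Nodup)
    (hcap : ∀ v, f v → ∀ p, v p ≤ I.cap p)
    (hM : I.IsMatching M) :
    I.CutoffStable f M ↔
      ∃ d : P → ℕ, (∀ p, d p ≤ Fintype.card A + 1) ∧ I.Induces d M ∧
        f (mcount M) ∧ I.MinimalCutoffs f d := by
  constructor
  · intro hstable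
    exact ⟨I.envyCutoff M, I.envyCutoff_le_card_add_one M,
      MatchInst.induces_envyCutoff hP hstable.1 hstable.2.1, hstable.2.2.1,
      MatchInst.minimalCutoffs_envyCutoff hP hcap hstable⟩
  · rintro ⟨d, -, hind, hfM, hmin⟩
    exact ⟨hM, hind.fair hP, hind.cutoffNonWasteful hP hmin hfM⟩

/-- A matching is cutoff stable iff it is induced by minimal cutoff scores. -/
theorem cutoffStable_iff_induced_by_minimal_cutoffs
    (I : MatchInst A P) (f : (P → ℕ) → Prop) (M : A → Option P)
    (hA : ∀ a, (I.prefA a).Nodup) (hP : ∀ p, (I.prefP p).Nodup)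
    (hf : Heredity f) (hcap : ∀ v, f v → ∀ p, v p ≤ I.cap p)
    (hM : I.IsMatching M) :
    I.CutoffStable f M ↔
      ∃ d : P → ℕ, (∀ p, d p ≤ Fintype.card A + 1) ∧ I.Induces d M ∧
        f (mcount M) ∧ I.MinimalCutoffs f d :=
  cutoffStable_iff_induced_by_minimal_cutoffs_general I f M hP hcap hM
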